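/- Suppose u satisfies the Spence–Mirrlees condition and f : D_y → ℝ is u-subdifferentiable at every point of D_y. If f is differentiable at an interior point y ∈ D_y, then the u-subdifferential ∂^u f(y) is a singleton {z*(y)}, and f'(y) = ∂u/∂y (y, z*(y)); moreover f(y) = u(y, z*(y)) − f^u(z*(y)), and any selection y ↦ z*(y) with z*(y) ∈ ∂^u f(y) at each y is nondecreasing. -/

import Mathlib

open Set

/-- The `u`-dual of a real-valued function `f` on `Dy`:
`f^u(z) = sup_{y ∈ Dy} (u(y,z) - f(y))`, valued in `EReal`. -/
noncomputable def uDual (Dy : Set ℝ) (u : ℝ → ℝ → ℝ) (f : ℝ → ℝ) (z : ℝ) : EReal :=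
  ⨆ y ∈ Dy, ((u y z : EReal) - (f y : EReal))

/-- The `u`-subdifferential of `f` at `y`:
`∂^u f(y) = { z ∈ Dz : f(y) + f^u(z) = u(y,z) }`. -/
def uSubdiff (Dy Dz : Set ℝ) (u : ℝ → ℝ → ℝ) (f : ℝ → ℝ) (y : ℝ) : Set ℝ :=
  {z | z ∈ Dz ∧ (f y : EReal) + uDual Dy u f z = (u y z : EReal)}

/-- The Spence–Mirrlees condition: `u` is C², `z ↦ u_y(y,z)` is strictly increasing on
`Dz` for each `y ∈ Dy`, and `y ↦ u_z(y,z)` is strictly increasing on `Dy` for each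
`z ∈ Dz`. -/
def SpenceMirrlees (Dy Dz : Set ℝ) (u : ℝ → ℝ → ℝ) : Prop :=
  ContDiff ℝ 2 (Function.uncurry u) ∧
  (∀ y ∈ Dy, StrictMonoOn (fun z => deriv (fun y' => u y' z) y) Dz) ∧
  (∀ z ∈ Dz, StrictMonoOn (fun y => deriv (fun z' => u y z') z) Dy)

/-! At a `u`-subgradient `z` of `f` at `y`, the function `w ↦ f w - u w z` is minimised over `Dy`
at `y`; at an interior point of differentiability this forces `f'(y) = u_y(y, z)`, and
`z ↦ u_y(y, z)` is injective by Spence–Mirrlees, so the subgradient is unique. Comparing the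
minimality conditions at `w₁ < w₂` gives `u(w₂, z₁) - u(w₁, z₁) ≤ u(w₂, z₂) - u(w₁, z₂)` for their
subgradients `z₁, z₂`, while `z ↦ u(w₂, z) - u(w₁, z)` is strictly increasing because its
derivative `u_z(w₂, ·) - u_z(w₁, ·)` is positive; hence `z₁ ≤ z₂`. -/

section Subgradient

variable {Dy Dz : Set ℝ} {u : ℝ → ℝ → ℝ} {f : ℝ → ℝ} {y z : ℝ}

lemma uDual_eq_of_mem_uSubdiff (hz : z ∈ uSubdiff Dy Dz u f y) :
    uDual Dy u f z = ((u y z - f y : ℝ) : EReal) := by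
  have h := hz.2
  have h_top : uDual Dy u f z ≠ ⊤ := by rintro h'; simp [h'] at h
  have h_bot : uDual Dy u f z ≠ ⊥ := by rintro h'; simp [h'] at h
  obtain ⟨d, hd⟩ : ∃ d : ℝ, uDual Dy u f z = d := ⟨_, (EReal.coe_toReal h_top h_bot).symm⟩
  rw [hd, ← EReal.coe_add, EReal.coe_eq_coe_iff] at h
  rw [hd, EReal.coe_eq_coe_iff]
  linarith

lemma coe_eq_sub_uDual_of_mem_uSubdiff (hz : z ∈ uSubdiff Dy Dz u f y) :
    (f y : EReal) = (u y z : EReal) - uDual Dy u f z := by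
  rw [uDual_eq_of_mem_uSubdiff hz, ← EReal.coe_sub, sub_sub_cancel]

lemma sub_le_sub_of_mem_uSubdiff (hz : z ∈ uSubdiff Dy Dz u f y) {w : ℝ} (hw : w ∈ Dy) :
    u w z - f w ≤ u y z - f y := by
  have hle : (u w z : EReal) - f w ≤ uDual Dy u f z :=
    le_iSup₂ (f := fun v (_ : v ∈ Dy) => (u v z : EReal) - f v) w hw
  rw [uDual_eq_of_mem_uSubdiff hz, ← EReal.coe_sub] at hle
  exact_mod_cast hle

lemma deriv_eq_of_mem_uSubdiff (hz : z ∈ uSubdiff Dy Dz u f y) (hy : y ∈ interior Dy)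
    (hf : DifferentiableAt ℝ f y) (hu : DifferentiableAt ℝ (fun y' => u y' z) y) :
    deriv f y = deriv (fun y' => u y' z) y := by
  have hmin : IsLocalMin (fun w => f w - u w z) y := by
    filter_upwards [mem_interior_iff_mem_nhds.mp hy] with w hw
    linarith [sub_le_sub_of_mem_uSubdiff hz hw]
  have h0 := hmin.deriv_eq_zero
  rw [deriv_fun_sub hf hu] at h0
  linarith

lemma monotoneOn_of_mem_uSubdiff
    (hinc : ∀ w₁ ∈ Dy, ∀ w₂ ∈ Dy, w₁ < w₂ → StrictMonoOn (fun z => u w₂ z - u w₁ z) Dz)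
    {zsel : ℝ → ℝ} (hsel : ∀ w ∈ Dy, zsel w ∈ uSubdiff Dy Dz u f w) :
    MonotoneOn zsel Dy := by
  intro w₁ hw₁ w₂ hw₂ hle
  rcases hle.eq_or_lt with rfl | hlt
  · exact le_rfl
  by_contra! hdesc
  have h₁ := sub_le_sub_of_mem_uSubdiff (hsel w₁ hw₁) hw₂
  have h₂ := sub_le_sub_of_mem_uSubdiff (hsel w₂ hw₂) hw₁
  have := hinc w₁ hw₁ w₂ hw₂ hlt (hsel w₂ hw₂).1 (hsel w₁ hw₁).1 hdesc
  linarith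

end Subgradient

section SpenceMirrlees

variable {Dy Dz : Set ℝ} {u : ℝ → ℝ → ℝ}

lemma differentiableAt_uncurry_left (hu : Differentiable ℝ (Function.uncurry u)) (y z : ℝ) :
    DifferentiableAt ℝ (fun y' => u y' z) y :=
  (hu.comp (differentiable_id.prodMk (differentiable_const z))).differentiableAt

lemma differentiableAt_uncurry_right (hu : Differentiable ℝ (Function.uncurry u)) (y z : ℝ) :
    DifferentiableAt ℝ (fun z' => u y z') z :=
  (hu.comp ((differentiable_const y).prodMk differentiable_id)).differentiableAt

lemma strictMonoOn_sub_of_strictMonoOn_deriv (hu : Differentiable ℝ (Function.uncurry u))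
    (hDz : Dz.OrdConnected)
    (hmono : ∀ z ∈ Dz, StrictMonoOn (fun y => deriv (fun z' => u y z') z) Dy)
    {w₁ w₂ : ℝ} (hw₁ : w₁ ∈ Dy) (hw₂ : w₂ ∈ Dy) (hlt : w₁ < w₂) :
    StrictMonoOn (fun z => u w₂ z - u w₁ z) Dz := by
  have hd : ∀ c, DifferentiableAt ℝ (fun z => u w₂ z - u w₁ z) c := fun c =>
    (differentiableAt_uncurry_right hu w₂ c).sub (differentiableAt_uncurry_right hu w₁ c)
  refine strictMonoOn_of_deriv_pos hDz.convex (fun c _ => (hd c).continuousAt.continuousWithinAt)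
    fun c hc => ?_
  rw [deriv_fun_sub (differentiableAt_uncurry_right hu w₂ c)
    (differentiableAt_uncurry_right hu w₁ c), sub_pos]
  exact hmono c (interior_subset hc) hw₁ hw₂ hlt

end SpenceMirrlees

theorem uSubdiff_singleton_of_differentiable_general
    (Dy Dz : Set ℝ)
    (hDzI : Dz.OrdConnected)
    (u : ℝ → ℝ → ℝ) (hSM : SpenceMirrlees Dy Dz u) (f : ℝ → ℝ)
    (hsub : ∀ y ∈ Dy, (uSubdiff Dy Dz u f y).Nonempty)
    (y : ℝ) (hy : y ∈ interior Dy) (hdiff : DifferentiableAt ℝ f y) :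
    (∃ zs : ℝ, uSubdiff Dy Dz u f y = {zs} ∧
      deriv f y = deriv (fun y' => u y' zs) y ∧
      (f y : EReal) = (u y zs : EReal) - uDual Dy u f zs) ∧
    (∀ zsel : ℝ → ℝ, (∀ w ∈ Dy, zsel w ∈ uSubdiff Dy Dz u f w) →
      MonotoneOn zsel Dy) := by
  obtain ⟨hC2, hSMy, hSMz⟩ := hSM
  have hu : Differentiable ℝ (Function.uncurry u) := hC2.differentiable (by norm_num)
  have hyD : y ∈ Dy := interior_subset hy
  have hfoc : ∀ z ∈ uSubdiff Dy Dz u f y, deriv f y = deriv (fun y' => u y' z) y :=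
    fun z hz => deriv_eq_of_mem_uSubdiff hz hy hdiff (differentiableAt_uncurry_left hu y z)
  obtain ⟨zs, hzs⟩ := hsub y hyD
  have hunique : ∀ z ∈ uSubdiff Dy Dz u f y, z = zs := fun z hz =>
    (hSMy y hyD).injOn hz.1 hzs.1 ((hfoc z hz).symm.trans (hfoc zs hzs))
  refine ⟨⟨zs, eq_singleton_iff_unique_mem.mpr ⟨hzs, hunique⟩, hfoc zs hzs,
    coe_eq_sub_uDual_of_mem_uSubdiff hzs⟩, fun zsel hsel => ?_⟩
  exact monotoneOn_of_mem_uSubdiff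
    (fun w₁ hw₁ w₂ hw₂ => strictMonoOn_sub_of_strictMonoOn_deriv hu hDzI hSMz hw₁ hw₂) hsel

/-- Under the Spence–Mirrlees condition, if `f` is `u`-subdifferentiable on `Dy` and
differentiable at an interior point `y`, then `∂^u f(y)` is a singleton `{z*}` with
`f'(y) = u_y(y, z*)` and `f(y) = u(y, z*) - f^u(z*)`; moreover any selection of the
`u`-subdifferential is nondecreasing on `Dy`. -/
theorem uSubdiff_singleton_of_differentiable
    (Dy Dz : Set ℝ) (hDy : Dy.Nonempty) (hDz : Dz.Nonempty)
    (hDyI : Dy.OrdConnected) (hDzI : Dz.OrdConnected)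
    (u : ℝ → ℝ → ℝ) (hSM : SpenceMirrlees Dy Dz u) (f : ℝ → ℝ)
    (hsub : ∀ y ∈ Dy, (uSubdiff Dy Dz u f y).Nonempty)
    (y : ℝ) (hy : y ∈ interior Dy) (hdiff : DifferentiableAt ℝ f y) :
    (∃ zs : ℝ, uSubdiff Dy Dz u f y = {zs} ∧
      deriv f y = deriv (fun y' => u y' zs) y ∧
      (f y : EReal) = (u y zs : EReal) - uDual Dy u f zs) ∧
    (∀ zsel : ℝ → ℝ, (∀ w ∈ Dy, zsel w ∈ uSubdiff Dy Dz u f w) →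
      MonotoneOn zsel Dy) :=
  uSubdiff_singleton_of_differentiable_general Dy Dz hDzI u hSM f hsub y hy hdiff
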